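/- arXiv:2307.05407 — 2 statements merged into one kernel-verified Lean document; each statement's English description precedes it below -/
import Mathlib

section
/- For any γ > 0 and m > 0, the constant c_γ(m) defined by c_γ(m) = (1/π) ∫₀^∞ e^{(γ²/2 − γm)t} Φ((m−γ)√t) dt equals 1/(π γ m), where Φ is the standard Gaussian cumulative distribution function. -/
open MeasureTheory Set

/-- Standard normal cumulative distribution function `Φ`. -/
noncomputable def stdNormalCDF (x : ℝ) : ℝ :=
  ∫ u in Iic x, Real.exp (-(u ^ 2) / 2) / Real.sqrt (2 * Real.pi)

/-!
Write `c = γ²/2 - γm` and `b = m - γ`, so that `b² = 2c + m²` and hence `e^{ct} φ(b√t) = φ(m√t)`.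
Integrating by parts against `e^{ct}/c`, the boundary term gives `-Φ(0)/c = -1/(2c)` and the
remaining integral is `(b/c) ∫₀^∞ φ(m√t)/(2√t) dt = b/(2cm)`, which yields `-(m+b)/(2cm) = 1/(γm)`
whenever `c ≠ 0`, i.e. `γ ≠ 2m`. For `γ > m` the Chernoff bound `Φ(x) ≤ e^{-x²/2}` (`x ≤ 0`)
dominates the integrand by `e^{-m²t/2}` uniformly in `γ`, so the integral is continuous in `γ`
at `2m`, which settles the remaining case.
-/

open Real Filter Topology ProbabilityTheory

lemma gaussianPDFReal_zero_one (u : ℝ) :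
    gaussianPDFReal 0 1 u = exp (-(u ^ 2) / 2) / √(2 * π) := by
  simp [gaussianPDFReal, div_eq_inv_mul]

lemma stdNormalCDF_eq_integral (x : ℝ) :
    stdNormalCDF x = ∫ u in Iic x, gaussianPDFReal 0 1 u := by
  simp only [stdNormalCDF, gaussianPDFReal_zero_one]

lemma stdNormalCDF_eq_cdf : stdNormalCDF = cdf (gaussianReal 0 1) := by
  ext x
  rw [cdf_eq_real, measureReal_def, gaussianReal_apply_eq_integral _ one_ne_zero,
    ENNReal.toReal_ofReal (setIntegral_nonneg measurableSet_Iic fun u _ ↦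
      gaussianPDFReal_nonneg _ _ u), stdNormalCDF_eq_integral]

lemma stdNormalCDF_nonneg (x : ℝ) : 0 ≤ stdNormalCDF x := stdNormalCDF_eq_cdf ▸ cdf_nonneg _ x

lemma stdNormalCDF_le_one (x : ℝ) : stdNormalCDF x ≤ 1 := stdNormalCDF_eq_cdf ▸ cdf_le_one _ x

lemma tendsto_stdNormalCDF_atTop : Tendsto stdNormalCDF atTop (𝓝 1) :=
  stdNormalCDF_eq_cdf ▸ tendsto_cdf_atTop _

lemma continuous_gaussianPDFReal (μ : ℝ) (v : NNReal) : Continuous (gaussianPDFReal μ v) := by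
  unfold gaussianPDFReal; fun_prop

lemma hasDerivAt_stdNormalCDF (x : ℝ) : HasDerivAt stdNormalCDF (gaussianPDFReal 0 1 x) x := by
  have hint := integrable_gaussianPDFReal 0 1
  have hsplit : ∀ y, stdNormalCDF y = stdNormalCDF 0 + ∫ u in (0 : ℝ)..y, gaussianPDFReal 0 1 u := by
    intro y
    rw [stdNormalCDF_eq_integral, stdNormalCDF_eq_integral,
      ← intervalIntegral.integral_Iic_sub_Iic hint.integrableOn hint.integrableOn]
    ring
  rw [funext hsplit]
  exact (intervalIntegral.integral_hasDerivAt_right hint.intervalIntegrable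
    ((continuous_gaussianPDFReal 0 1).stronglyMeasurableAtFilter _ _)
    (continuous_gaussianPDFReal 0 1).continuousAt).const_add _

@[fun_prop]
lemma continuous_stdNormalCDF : Continuous stdNormalCDF :=
  continuous_iff_continuousAt.2 fun x ↦ (hasDerivAt_stdNormalCDF x).continuousAt

lemma stdNormalCDF_zero : stdNormalCDF 0 = 1 / 2 := by
  have hint := integrable_gaussianPDFReal 0 1
  have hsymm : ∫ u in Ioi (0 : ℝ), gaussianPDFReal 0 1 u = stdNormalCDF 0 := by
    rw [stdNormalCDF_eq_integral, ← neg_zero, ← integral_comp_neg_Ioi]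
    simp [gaussianPDFReal]
  have htotal := integral_add_compl (measurableSet_Iic (a := (0 : ℝ))) hint
  rw [compl_Iic, integral_gaussianPDFReal_eq_one 0 one_ne_zero, ← stdNormalCDF_eq_integral,
    hsymm] at htotal
  linarith

lemma stdNormalCDF_le_exp {x : ℝ} (hx : x ≤ 0) : stdNormalCDF x ≤ exp (-(x ^ 2) / 2) := by
  have h := measure_le_le_exp_mul_mgf (μ := gaussianReal 0 1) (X := id) x hx
    (integrable_exp_mul_gaussianReal x)
  rw [stdNormalCDF_eq_cdf, cdf_eq_real]
  refine h.trans_eq ?_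
  rw [mgf_id_gaussianReal, ← exp_add]
  congr 1
  push_cast
  ring

lemma hasDerivAt_stdNormalCDF_mul_sqrt (b : ℝ) {t : ℝ} (ht : 0 < t) :
    HasDerivAt (fun s ↦ stdNormalCDF (b * √s)) (gaussianPDFReal 0 1 (b * √t) * (b / (2 * √t))) t :=
  ((hasDerivAt_stdNormalCDF _).comp t ((hasDerivAt_sqrt ht.ne').const_mul b)).congr_deriv
    (by rw [mul_one_div])

lemma tendsto_stdNormalCDF_mul_sqrt_atTop {m : ℝ} (hm : 0 < m) :
    Tendsto (fun t ↦ stdNormalCDF (m * √t)) atTop (𝓝 1) :=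
  tendsto_stdNormalCDF_atTop.comp (tendsto_sqrt_atTop.const_mul_atTop hm)

section
variable {b c m : ℝ}

lemma exp_mul_gaussianPDFReal_mul_sqrt (hbcm : b ^ 2 = 2 * c + m ^ 2) {t : ℝ} (ht : 0 ≤ t) :
    exp (c * t) * gaussianPDFReal 0 1 (b * √t) = gaussianPDFReal 0 1 (m * √t) := by
  simp only [gaussianPDFReal_zero_one, mul_pow, sq_sqrt ht, ← mul_div_assoc, ← exp_add, hbcm]
  ring_nf

lemma exp_mul_stdNormalCDF_le (hbcm : b ^ 2 = 2 * c + m ^ 2) (hb : b ≤ 0) {t : ℝ} (ht : 0 ≤ t) :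
    exp (c * t) * stdNormalCDF (b * √t) ≤ exp (-(m ^ 2 / 2) * t) :=
  calc exp (c * t) * stdNormalCDF (b * √t)
      ≤ exp (c * t) * exp (-((b * √t) ^ 2) / 2) :=
        mul_le_mul_of_nonneg_left (stdNormalCDF_le_exp (mul_nonpos_of_nonpos_of_nonneg hb
          (sqrt_nonneg t))) (exp_pos _).le
    _ = exp (-(m ^ 2 / 2) * t) := by
        rw [← exp_add, mul_pow, sq_sqrt ht, hbcm]; ring_nf

lemma exists_exp_bound_exp_mul_stdNormalCDF (hm : 0 < m) (hbcm : b ^ 2 = 2 * c + m ^ 2)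
    (h : c < 0 ∨ b ≤ 0) :
    ∃ a < 0, ∀ t, 0 ≤ t → exp (c * t) * stdNormalCDF (b * √t) ≤ exp (a * t) := by
  rcases h with hc | hb
  · exact ⟨c, hc, fun t _ ↦ mul_le_of_le_one_right (exp_pos _).le (stdNormalCDF_le_one _)⟩
  · exact ⟨-(m ^ 2 / 2), by nlinarith, fun t ht ↦ exp_mul_stdNormalCDF_le hbcm hb ht⟩

lemma integrableOn_exp_mul_stdNormalCDF (hm : 0 < m) (hbcm : b ^ 2 = 2 * c + m ^ 2)
    (h : c < 0 ∨ b ≤ 0) : IntegrableOn (fun t ↦ exp (c * t) * stdNormalCDF (b * √t)) (Ioi 0) := by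
  obtain ⟨a, ha, hbound⟩ := exists_exp_bound_exp_mul_stdNormalCDF hm hbcm h
  refine (integrableOn_exp_mul_Ioi ha 0).mono' (by fun_prop) ?_
  filter_upwards [ae_restrict_mem measurableSet_Ioi] with t ht
  rw [norm_of_nonneg (mul_nonneg (exp_pos _).le (stdNormalCDF_nonneg _))]
  exact hbound t (le_of_lt ht)

lemma tendsto_exp_mul_stdNormalCDF_atTop (hm : 0 < m) (hbcm : b ^ 2 = 2 * c + m ^ 2)
    (h : c < 0 ∨ b ≤ 0) : Tendsto (fun t ↦ exp (c * t) * stdNormalCDF (b * √t)) atTop (𝓝 0) := by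
  obtain ⟨a, ha, hbound⟩ := exists_exp_bound_exp_mul_stdNormalCDF hm hbcm h
  refine squeeze_zero' (.of_forall fun t ↦ mul_nonneg (exp_pos _).le (stdNormalCDF_nonneg _)) ?_
    (tendsto_exp_atBot.comp (tendsto_id.const_mul_atTop_of_neg ha))
  filter_upwards [eventually_ge_atTop 0] with t ht using hbound t ht

lemma integral_exp_mul_stdNormalCDF (hm : 0 < m) (hbcm : b ^ 2 = 2 * c + m ^ 2) (hc : c ≠ 0)
    (h : c < 0 ∨ b ≤ 0) :
    ∫ t in Ioi 0, exp (c * t) * stdNormalCDF (b * √t) = -(m + b) / (2 * c * m) := by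
  set F : ℝ → ℝ := fun t ↦ (exp (c * t) * stdNormalCDF (b * √t) - b / m * stdNormalCDF (m * √t)) / c
  have hderiv : ∀ t ∈ Ioi 0, HasDerivAt F (exp (c * t) * stdNormalCDF (b * √t)) t := by
    intro t ht
    refine ((((hasDerivAt_id t).const_mul c).exp.mul (hasDerivAt_stdNormalCDF_mul_sqrt b ht)).sub
      ((hasDerivAt_stdNormalCDF_mul_sqrt m ht).const_mul (b / m))).div_const c |>.congr_deriv ?_
    rw [← exp_mul_gaussianPDFReal_mul_sqrt hbcm ht.le, id]
    field_simp
    ring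
  have hlim : Tendsto F atTop (𝓝 ((0 - b / m * 1) / c)) :=
    ((tendsto_exp_mul_stdNormalCDF_atTop hm hbcm h).sub
      ((tendsto_stdNormalCDF_mul_sqrt_atTop hm).const_mul _)).div_const c
  rw [integral_Ioi_of_hasDerivAt_of_tendsto (by fun_prop : Continuous F).continuousWithinAt hderiv
    (integrableOn_exp_mul_stdNormalCDF hm hbcm h) hlim]
  simp only [F, mul_zero, exp_zero, sqrt_zero, stdNormalCDF_zero]
  field_simp
  ring

end

section
variable {γ m : ℝ}

lemma integral_exp_mul_stdNormalCDF_of_ne_two_mul (hγ : 0 < γ) (hm : 0 < m) (hne : γ ≠ 2 * m) :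
    ∫ t in Ioi 0, exp ((γ ^ 2 / 2 - γ * m) * t) * stdNormalCDF ((m - γ) * √t) = 1 / (γ * m) := by
  have hne' : γ - 2 * m ≠ 0 := sub_ne_zero.2 hne
  have hc : γ ^ 2 / 2 - γ * m ≠ 0 := by
    rw [show γ ^ 2 / 2 - γ * m = γ * (γ - 2 * m) / 2 by ring]
    exact div_ne_zero (mul_ne_zero hγ.ne' hne') two_ne_zero
  have h : γ ^ 2 / 2 - γ * m < 0 ∨ m - γ ≤ 0 := by
    rcases lt_or_ge γ (2 * m) with hlt | hge
    · left; nlinarith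
    · right; linarith
  rw [integral_exp_mul_stdNormalCDF hm (by ring) hc h, show -(m + (m - γ)) = γ - 2 * m by ring,
    show 2 * (γ ^ 2 / 2 - γ * m) * m = (γ - 2 * m) * (γ * m) by ring, ← div_div, div_self hne']

lemma continuousAt_integral_exp_mul_stdNormalCDF (hm : 0 < m) :
    ContinuousAt (fun γ ↦
      ∫ t in Ioi 0, exp ((γ ^ 2 / 2 - γ * m) * t) * stdNormalCDF ((m - γ) * √t)) (2 * m) := by
  refine continuousAt_of_dominated (bound := fun t ↦ exp (-(m ^ 2 / 2) * t))
    (.of_forall fun γ ↦ by fun_prop) ?_ (exp_neg_integrableOn_Ioi 0 (by positivity))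
    (.of_forall fun t ↦ by fun_prop)
  filter_upwards [Ioi_mem_nhds (by linarith : m < 2 * m)] with γ hγ
  filter_upwards [ae_restrict_mem measurableSet_Ioi] with t ht
  rw [norm_of_nonneg (mul_nonneg (exp_pos _).le (stdNormalCDF_nonneg _))]
  exact exp_mul_stdNormalCDF_le (by ring) (by linarith [mem_Ioi.1 hγ]) (le_of_lt ht)

lemma integral_exp_mul_stdNormalCDF_eq_one_div (hγ : 0 < γ) (hm : 0 < m) :
    ∫ t in Ioi 0, exp ((γ ^ 2 / 2 - γ * m) * t) * stdNormalCDF ((m - γ) * √t) = 1 / (γ * m) := by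
  rcases ne_or_eq γ (2 * m) with hne | rfl
  · exact integral_exp_mul_stdNormalCDF_of_ne_two_mul hγ hm hne
  refine tendsto_nhds_unique
    ((continuousAt_integral_exp_mul_stdNormalCDF hm).tendsto.mono_left
      (nhdsWithin_le_nhds (s := {2 * m}ᶜ))) ?_
  have hcont : ContinuousAt (fun γ ↦ 1 / (γ * m)) (2 * m) := by fun_prop (disch := positivity)
  refine (hcont.tendsto.mono_left nhdsWithin_le_nhds).congr' ?_
  filter_upwards [self_mem_nhdsWithin, nhdsWithin_le_nhds (Ioi_mem_nhds hγ)] with γ hne hpos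
  exact (integral_exp_mul_stdNormalCDF_of_ne_two_mul hpos hm hne).symm

end

/-- **Evaluation of the constant `c_γ(m)`.** For any `γ, m > 0`,
`(1/π) ∫₀^∞ exp((γ²/2 - γ m) t) Φ((m - γ) √t) dt = 1/(π γ m)`. -/
theorem stmt3 (γ m : ℝ) (hγ : 0 < γ) (hm : 0 < m) :
    (1 / Real.pi) *
        ∫ t in Ioi (0 : ℝ),
          Real.exp ((γ ^ 2 / 2 - γ * m) * t) * stdNormalCDF ((m - γ) * Real.sqrt t) =
      1 / (Real.pi * γ * m) := by
  rw [integral_exp_mul_stdNormalCDF_eq_one_div hγ hm, one_div_mul_one_div, mul_assoc]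
end

section
/- Polynomial approximation for Karamata's argument: for each α ≥ 0 and ε ∈ (0, 1/(2e)), there exist a constant C(α) < ∞ independent of ε and polynomials P₋, P₊ with P±(0) = 0 such that P₋(x) ≤ 1_{[e^{−1},1]}(x) ≤ P₊(x) for all x ∈ [0,1], and ∫₀¹ |P±(x) − 1_{[e^{−1},1]}(x)| · α (log(1/x))^{α−1} dx/x ≤ C(α) ε. -/
/-!
Replace the jump of `1_{[e⁻¹,1]}` by a ramp of width `ε`, placed just left of `e⁻¹` for `P₊`
and just right of it for `P₋`. The ramp vanishes near `0`, so `ramp x / x` is continuous and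
Weierstrass gives `q` with `|q - ramp / x| < ε / 2`; then `x (q ± ε/2)` vanishes at `0` and lies
between the ramp and the ramp `± ε x`. Hence `|P± - 1_{[e⁻¹,1]}| ≤ 1_J + ε x` for an interval `J`
of length `ε`. The weight is bounded on `J`, which stays in a compact subset of `(0, 1)`, and
`∫₀¹ x · α (log 1/x)^{α-1} dx/x ≤ Γ(α+1)`, so both contributions are `O(ε)`.
-/

open Set MeasureTheory Polynomial

section GammaIntegral

variable {β : ℝ}

lemma image_exp_neg_Ioi_zero : (fun t => Real.exp (-t)) '' Ioi 0 = Ioo 0 1 := by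
  ext y
  constructor
  · rintro ⟨t, ht, rfl⟩
    exact ⟨Real.exp_pos _, Real.exp_lt_one_iff.2 (neg_lt_zero.2 ht)⟩
  · rintro ⟨h0, h1⟩
    exact ⟨-Real.log y, neg_pos.2 (Real.log_neg h0 h1), by simp [Real.exp_log h0]⟩

private lemma hasDerivWithinAt_exp_neg (t : ℝ) :
    HasDerivWithinAt (fun t => Real.exp (-t)) (-Real.exp (-t)) (Ioi 0) t := by
  simpa using (hasDerivAt_neg t).exp.hasDerivWithinAt

private lemma injOn_exp_neg : InjOn (fun t => Real.exp (-t)) (Ioi 0) :=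
  fun _ _ _ _ h => neg_inj.1 (Real.exp_injective h)

private lemma abs_deriv_smul_log_one_div_rpow (t : ℝ) :
    |-Real.exp (-t)| • Real.log (1 / Real.exp (-t)) ^ (β - 1) = Real.exp (-t) * t ^ (β - 1) := by
  rw [abs_neg, abs_of_pos (Real.exp_pos _), smul_eq_mul, one_div, ← Real.exp_neg, neg_neg,
    Real.log_exp]

/-- The substitution `x = e^{-t}` turns this into Euler's integral for `Γ(β)`. -/
lemma integrableOn_log_one_div_rpow (hβ : 0 < β) :
    IntegrableOn (fun x => Real.log (1 / x) ^ (β - 1)) (Ioc 0 1) := by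
  rw [integrableOn_Ioc_iff_integrableOn_Ioo, ← image_exp_neg_Ioi_zero,
    integrableOn_image_iff_integrableOn_abs_deriv_smul measurableSet_Ioi
      (fun t _ => hasDerivWithinAt_exp_neg t) injOn_exp_neg]
  simpa only [abs_deriv_smul_log_one_div_rpow] using Real.GammaIntegral_convergent hβ

lemma integral_log_one_div_rpow (hβ : 0 < β) :
    ∫ x in Ioc 0 1, Real.log (1 / x) ^ (β - 1) = Real.Gamma β := by
  rw [integral_Ioc_eq_integral_Ioo, ← image_exp_neg_Ioi_zero,
    integral_image_eq_integral_abs_deriv_smul measurableSet_Ioi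
      (fun t _ => hasDerivWithinAt_exp_neg t) injOn_exp_neg]
  simp only [abs_deriv_smul_log_one_div_rpow]
  exact (Real.Gamma_eq_integral hβ).symm

end GammaIntegral

noncomputable def karamataWeight (α x : ℝ) : ℝ := α * Real.log (1 / x) ^ (α - 1) / x

section KaramataWeight

variable {α : ℝ}

lemma measurable_karamataWeight : Measurable (karamataWeight α) := by
  unfold karamataWeight; fun_prop

lemma karamataWeight_nonneg (hα : 0 ≤ α) {x : ℝ} (hx : x ∈ Ioc 0 1) : 0 ≤ karamataWeight α x := by
  have hlog : 0 ≤ Real.log (1 / x) := Real.log_nonneg ((one_le_div hx.1).2 hx.2)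
  exact div_nonneg (mul_nonneg hα (Real.rpow_nonneg hlog _)) hx.1.le

lemma mul_karamataWeight {x : ℝ} (hx : x ≠ 0) :
    x * karamataWeight α x = α * Real.log (1 / x) ^ (α - 1) := by
  unfold karamataWeight; field_simp

lemma integrableOn_mul_karamataWeight (hα : 0 ≤ α) :
    IntegrableOn (fun x => x * karamataWeight α x) (Ioc 0 1) := by
  refine (integrableOn_congr_fun (fun x hx => (mul_karamataWeight hx.1.ne').symm)
    measurableSet_Ioc).1 ?_
  rcases hα.eq_or_lt with rfl | hα
  · simp
  · exact (integrableOn_log_one_div_rpow hα).const_mul α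

lemma setIntegral_mul_karamataWeight_le (hα : 0 ≤ α) :
    ∫ x in Ioc 0 1, x * karamataWeight α x ≤ Real.Gamma (α + 1) := by
  rw [setIntegral_congr_fun measurableSet_Ioc (fun x hx => mul_karamataWeight hx.1.ne'),
    integral_const_mul]
  rcases hα.eq_or_lt with rfl | hα
  · simp
  · rw [integral_log_one_div_rpow hα, Real.Gamma_add_one hα.ne']

lemma exists_karamataWeight_le_on_Icc {a b : ℝ} (ha : 0 < a) (hb : b < 1) :
    ∃ K, 0 ≤ K ∧ ∀ x ∈ Icc a b, karamataWeight α x ≤ K := by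
  have hcont : ContinuousOn (karamataWeight α) (Icc a b) := by
    intro x hx
    have hx0 : 0 < x := ha.trans_le hx.1
    have hlog : 0 < Real.log (1 / x) := Real.log_pos ((one_lt_div hx0).2 (hx.2.trans_lt hb))
    refine ContinuousAt.continuousWithinAt ?_
    unfold karamataWeight
    fun_prop (disch := first | positivity | exact Or.inl hlog.ne')
  obtain ⟨K, hK⟩ := isCompact_Icc.bddAbove_image hcont
  exact ⟨max K 0, le_max_right _ _, fun x hx => (hK ⟨x, hx, rfl⟩).trans (le_max_left _ _)⟩

end KaramataWeight

lemma setIntegral_abs_mul_le_of_abs_le_indicator_add {X : Type*} [MeasurableSpace X]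
    {μ : Measure X} {s J : Set X} {f g w : X → ℝ} {K M ε : ℝ}
    (hs : MeasurableSet s) (hJ : MeasurableSet J) (hJε : μ J ≤ ENNReal.ofReal ε) (hε : 0 ≤ ε)
    (hf : AEStronglyMeasurable f (μ.restrict s)) (hw : AEStronglyMeasurable w (μ.restrict s))
    (hw0 : ∀ x ∈ s, 0 ≤ w x) (hK : 0 ≤ K) (hwK : ∀ x ∈ s ∩ J, w x ≤ K)
    (hgw : IntegrableOn (fun x => g x * w x) s μ) (hM : ∫ x in s, g x * w x ∂μ ≤ M)
    (hfJ : ∀ x ∈ s, |f x| ≤ J.indicator (fun _ => 1) x + ε * g x) :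
    ∫ x in s, |f x| * w x ∂μ ≤ (K + M) * ε := by
  set G : X → ℝ := fun x => J.indicator (fun _ => K) x + ε * (g x * w x)
  have hpt : ∀ x ∈ s, |f x| * w x ≤ G x := by
    intro x hx
    have hJw : J.indicator (fun _ => 1) x * w x ≤ J.indicator (fun _ => K) x := by
      by_cases hxJ : x ∈ J
      · simpa [hxJ] using hwK x ⟨hx, hxJ⟩
      · simp [hxJ]
    calc |f x| * w x ≤ (J.indicator (fun _ => 1) x + ε * g x) * w x :=
          mul_le_mul_of_nonneg_right (hfJ x hx) (hw0 x hx)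
      _ ≤ G x := by simp only [G]; linarith
  have hJs : μ.restrict s J ≤ ENNReal.ofReal ε := (μ.restrict_apply_le s J).trans hJε
  have hKint : IntegrableOn (J.indicator fun _ => K) s μ :=
    (integrable_indicator_iff hJ).2 (integrableOn_const (hJs.trans_lt ENNReal.ofReal_lt_top).ne)
  have hGint : IntegrableOn G s μ := hKint.add (hgw.const_mul ε)
  have hFint : IntegrableOn (fun x => |f x| * w x) s μ := by
    refine hGint.mono' (hf.norm.mul hw) ((ae_restrict_iff' hs).2 (ae_of_all _ fun x hx => ?_))
    rw [Real.norm_eq_abs, abs_of_nonneg (mul_nonneg (abs_nonneg _) (hw0 x hx))]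
    exact hpt x hx
  have hJreal : (μ.restrict s).real J ≤ ε := ENNReal.toReal_le_of_le_ofReal hε hJs
  calc ∫ x in s, |f x| * w x ∂μ ≤ ∫ x in s, G x ∂μ := setIntegral_mono_on hFint hGint hs hpt
    _ = (μ.restrict s).real J * K + ε * ∫ x in s, g x * w x ∂μ := by
      rw [integral_add hKint (hgw.const_mul ε), integral_indicator_const _ hJ, integral_const_mul,
        smul_eq_mul]
    _ ≤ ε * K + ε * M := by gcongr
    _ = (K + M) * ε := by ring

section PolynomialApprox

variable {g : ℝ → ℝ} {c δ : ℝ}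

/-- Weierstrass applied to `g x / x` (made continuous by `max x c`), then shifted up by `δ / 2`. -/
lemma exists_polynomial_upper_approx (hc : 0 < c) (hδ : 0 < δ) (hg : ContinuousOn g (Icc 0 1))
    (hg0 : ∀ x ∈ Ico 0 c, g x = 0) :
    ∃ P : ℝ[X], P.eval 0 = 0 ∧ ∀ x ∈ Icc (0 : ℝ) 1, g x ≤ P.eval x ∧ P.eval x ≤ g x + δ * x := by
  set u : ℝ → ℝ := fun x => g x / max x c
  have hu : ContinuousOn u (Icc 0 1) :=
    hg.div (continuous_id.max continuous_const).continuousOn fun x _ => (lt_max_of_lt_right hc).ne'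
  have hxu : ∀ x ∈ Icc (0 : ℝ) 1, x * u x = g x := by
    intro x hx
    rcases lt_or_ge x c with hxc | hcx
    · simp [u, hg0 x ⟨hx.1, hxc⟩]
    · have hx0 : x ≠ 0 := (hc.trans_le hcx).ne'
      simp only [u, max_eq_left hcx]
      field_simp
  obtain ⟨q, hq⟩ := exists_polynomial_near_of_continuousOn 0 1 u hu (δ / 2) (half_pos hδ)
  refine ⟨X * (q + C (δ / 2)), by simp, fun x hx => ?_⟩
  obtain ⟨hqu, huq⟩ := abs_lt.1 (hq x hx)
  simp only [eval_mul, eval_X, eval_add, eval_C, ← hxu x hx]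
  constructor <;> nlinarith [hx.1]

lemma exists_polynomial_lower_approx (hc : 0 < c) (hδ : 0 < δ) (hg : ContinuousOn g (Icc 0 1))
    (hg0 : ∀ x ∈ Ico 0 c, g x = 0) :
    ∃ P : ℝ[X], P.eval 0 = 0 ∧ ∀ x ∈ Icc (0 : ℝ) 1, g x - δ * x ≤ P.eval x ∧ P.eval x ≤ g x := by
  obtain ⟨P, hP0, hP⟩ := exists_polynomial_upper_approx hc hδ hg.neg fun x hx => by simp [hg0 x hx]
  refine ⟨-P, by simp [hP0], fun x hx => ?_⟩
  obtain ⟨hgP, hPg⟩ := hP x hx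
  simp only [eval_neg, Pi.neg_apply] at hgP hPg ⊢
  constructor <;> linarith

end PolynomialApprox

noncomputable def ramp (c ε x : ℝ) : ℝ := max 0 (min 1 ((x - c) / ε))

section Ramp

variable {b c ε x : ℝ}

lemma continuous_ramp : Continuous (ramp c ε) := by
  unfold ramp; fun_prop

lemma ramp_nonneg : 0 ≤ ramp c ε x := le_max_left _ _

lemma ramp_le_one : ramp c ε x ≤ 1 := max_le zero_le_one (min_le_left _ _)

lemma ramp_of_le (hε : 0 < ε) (hx : x ≤ c) : ramp c ε x = 0 :=
  max_eq_left ((min_le_right _ _).trans (div_nonpos_of_nonpos_of_nonneg (by linarith) hε.le))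

lemma ramp_of_ge (hε : 0 < ε) (hx : c + ε ≤ x) : ramp c ε x = 1 := by
  have : 1 ≤ (x - c) / ε := (one_le_div hε).2 (by linarith)
  simp [ramp, min_eq_left this]

lemma indicator_Icc_le_ramp (hε : 0 < ε) :
    indicator (Icc b 1) (fun _ => (1 : ℝ)) x ≤ ramp (b - ε) ε x := by
  by_cases hx : x ∈ Icc b 1
  · simp [hx, ramp_of_ge hε (by linarith [hx.1] : b - ε + ε ≤ x)]
  · simp [hx, ramp_nonneg]

lemma ramp_sub_indicator_Icc_le (hε : 0 < ε) (hx : x ≤ 1) :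
    ramp (b - ε) ε x - indicator (Icc b 1) (fun _ => (1 : ℝ)) x
      ≤ indicator (Icc (b - ε) b) (fun _ => (1 : ℝ)) x := by
  have hJ : 0 ≤ indicator (Icc (b - ε) b) (fun _ => (1 : ℝ)) x :=
    indicator_nonneg (fun _ _ => zero_le_one) x
  rcases le_or_gt b x with hbx | hxb
  · rw [indicator_of_mem (s := Icc b 1) ⟨hbx, hx⟩]
    linarith [ramp_le_one (c := b - ε) (ε := ε) (x := x)]
  have hI : indicator (Icc b 1) (fun _ => (1 : ℝ)) x = 0 :=
    indicator_of_notMem (fun h => hxb.not_ge h.1) _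
  rcases le_or_gt (b - ε) x with hεx | hxε
  · rw [hI, indicator_of_mem (s := Icc (b - ε) b) ⟨hεx, hxb.le⟩]
    linarith [ramp_le_one (c := b - ε) (ε := ε) (x := x)]
  · rw [hI, ramp_of_le hε hxε.le]
    linarith

lemma ramp_le_indicator_Icc (hε : 0 < ε) (hx : x ≤ 1) :
    ramp b ε x ≤ indicator (Icc b 1) (fun _ => (1 : ℝ)) x := by
  rcases le_or_gt b x with hbx | hxb
  · rw [indicator_of_mem (s := Icc b 1) ⟨hbx, hx⟩]
    exact ramp_le_one
  · rw [ramp_of_le hε hxb.le]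
    exact indicator_nonneg (fun _ _ => zero_le_one) x

lemma indicator_Icc_sub_ramp_le (hε : 0 < ε) :
    indicator (Icc b 1) (fun _ => (1 : ℝ)) x - ramp b ε x
      ≤ indicator (Icc b (b + ε)) (fun _ => (1 : ℝ)) x := by
  have hI : indicator (Icc b 1) (fun _ => (1 : ℝ)) x ≤ 1 :=
    indicator_le_self' (fun _ _ => zero_le_one) x
  have hJ : 0 ≤ indicator (Icc b (b + ε)) (fun _ => (1 : ℝ)) x :=
    indicator_nonneg (fun _ _ => zero_le_one) x
  rcases lt_or_ge x b with hxb | hbx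
  · rw [indicator_of_notMem (fun h => hxb.not_ge h.1)]
    linarith [ramp_nonneg (c := b) (ε := ε) (x := x)]
  rcases le_or_gt x (b + ε) with hxε | hεx
  · rw [indicator_of_mem (s := Icc b (b + ε)) ⟨hbx, hxε⟩]
    linarith [ramp_nonneg (c := b) (ε := ε) (x := x)]
  · rw [ramp_of_ge hε hεx.le]
    linarith

end Ramp

section Sandwich

variable {b ε : ℝ}

lemma exists_polynomial_ge_indicator_Icc (hε : 0 < ε) (hεb : ε < b) :
    ∃ P : ℝ[X], P.eval 0 = 0 ∧ ∀ x ∈ Icc (0 : ℝ) 1,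
      indicator (Icc b 1) (fun _ => (1 : ℝ)) x ≤ P.eval x ∧
      |P.eval x - indicator (Icc b 1) (fun _ => (1 : ℝ)) x|
        ≤ indicator (Icc (b - ε) b) (fun _ => (1 : ℝ)) x + ε * x := by
  obtain ⟨P, hP0, hP⟩ := exists_polynomial_upper_approx (sub_pos.2 hεb) hε
    continuous_ramp.continuousOn fun x hx => ramp_of_le hε hx.2.le
  refine ⟨P, hP0, fun x hx => ?_⟩
  have hIr := indicator_Icc_le_ramp (b := b) (x := x) hε
  have hrI := ramp_sub_indicator_Icc_le (b := b) hε hx.2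
  obtain ⟨hrP, hPr⟩ := hP x hx
  exact ⟨hIr.trans hrP, abs_le.2 ⟨by linarith, by linarith⟩⟩

lemma exists_polynomial_le_indicator_Icc (hε : 0 < ε) (hb : 0 < b) :
    ∃ P : ℝ[X], P.eval 0 = 0 ∧ ∀ x ∈ Icc (0 : ℝ) 1,
      P.eval x ≤ indicator (Icc b 1) (fun _ => (1 : ℝ)) x ∧
      |P.eval x - indicator (Icc b 1) (fun _ => (1 : ℝ)) x|
        ≤ indicator (Icc b (b + ε)) (fun _ => (1 : ℝ)) x + ε * x := by
  obtain ⟨P, hP0, hP⟩ := exists_polynomial_lower_approx hb hε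
    continuous_ramp.continuousOn fun x hx => ramp_of_le hε hx.2.le
  refine ⟨P, hP0, fun x hx => ?_⟩
  have hrI := ramp_le_indicator_Icc (b := b) hε hx.2
  have hIr := indicator_Icc_sub_ramp_le (b := b) (x := x) hε
  obtain ⟨hrP, hPr⟩ := hP x hx
  exact ⟨hPr.trans hrI, abs_le.2 ⟨by linarith, by linarith⟩⟩

end Sandwich

lemma setIntegral_abs_mul_karamataWeight_le {α c d ε K : ℝ} {f : ℝ → ℝ} (hα : 0 ≤ α)
    (hε : 0 ≤ ε) (hcd : d ≤ c + ε) (hf : Measurable f) (hK0 : 0 ≤ K)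
    (hK : ∀ x ∈ Icc c d, karamataWeight α x ≤ K)
    (hfJ : ∀ x ∈ Ioc 0 1, |f x| ≤ indicator (Icc c d) (fun _ => (1 : ℝ)) x + ε * x) :
    ∫ x in Ioc 0 1, |f x| * karamataWeight α x ≤ (K + Real.Gamma (α + 1)) * ε :=
  setIntegral_abs_mul_le_of_abs_le_indicator_add measurableSet_Ioc measurableSet_Icc
    (by rw [Real.volume_Icc]; exact ENNReal.ofReal_le_ofReal (by linarith)) hε
    hf.aestronglyMeasurable measurable_karamataWeight.aestronglyMeasurable
    (fun x hx => karamataWeight_nonneg hα hx) hK0 (fun x hx => hK x hx.2)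
    (integrableOn_mul_karamataWeight hα) (setIntegral_mul_karamataWeight_le hα) hfJ

/-- **Polynomial approximation for Karamata's argument.** For each `α ≥ 0` there is a constant
`C(α) < ∞`, independent of `ε`, such that for every `ε ∈ (0, 1/(2e))` there are polynomials
`P₋, P₊` vanishing at `0` with `P₋ ≤ 1_{[e^{-1},1]} ≤ P₊` on `[0,1]` and
`∫₀¹ |P±(x) - 1_{[e^{-1},1]}(x)| α (log(1/x))^{α-1} dx/x ≤ C(α) ε`. -/
theorem stmt16 (α : ℝ) (hα : 0 ≤ α) :
    ∃ C : ℝ, 0 ≤ C ∧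
      ∀ ε : ℝ, ε ∈ Ioo 0 (1 / (2 * Real.exp 1)) →
        ∃ Pm Pp : Polynomial ℝ,
          Pm.eval 0 = 0 ∧ Pp.eval 0 = 0 ∧
          (∀ x ∈ Icc (0 : ℝ) 1,
            Pm.eval x ≤ indicator (Icc (Real.exp (-1)) 1) (fun _ => (1 : ℝ)) x ∧
            indicator (Icc (Real.exp (-1)) 1) (fun _ => (1 : ℝ)) x ≤ Pp.eval x) ∧
          (∫ x in Ioc (0 : ℝ) 1,
              |Pm.eval x - indicator (Icc (Real.exp (-1)) 1) (fun _ => (1 : ℝ)) x| *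
                (α * Real.log (1 / x) ^ (α - 1) / x)) ≤ C * ε ∧
          (∫ x in Ioc (0 : ℝ) 1,
              |Pp.eval x - indicator (Icc (Real.exp (-1)) 1) (fun _ => (1 : ℝ)) x| *
                (α * Real.log (1 / x) ^ (α - 1) / x)) ≤ C * ε := by
  set b := Real.exp (-1)
  have hb : 0 < b := Real.exp_pos _
  obtain ⟨K, hK0, hK⟩ := exists_karamataWeight_le_on_Icc (α := α) (half_pos hb)
    (show 3 * b / 2 < 1 by linarith [Real.exp_neg_one_lt_half])
  refine ⟨K + Real.Gamma (α + 1), add_nonneg hK0 (Real.Gamma_pos_of_pos (by linarith)).le,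
    fun ε ⟨hε, hεe⟩ => ?_⟩
  have hεb : ε < b / 2 := by
    rwa [show b / 2 = 1 / (2 * Real.exp 1) by simp [b, Real.exp_neg]; ring]
  obtain ⟨Pm, hPm0, hPm⟩ := exists_polynomial_le_indicator_Icc hε hb
  obtain ⟨Pp, hPp0, hPp⟩ := exists_polynomial_ge_indicator_Icc (b := b) hε (by linarith)
  have hmeas (P : ℝ[X]) : Measurable fun x => P.eval x - indicator (Icc b 1) (fun _ => (1 : ℝ)) x :=
    P.continuous.measurable.sub (measurable_const.indicator measurableSet_Icc)
  refine ⟨Pm, Pp, hPm0, hPp0, fun x hx => ⟨(hPm x hx).1, (hPp x hx).1⟩, ?_, ?_⟩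
  · exact setIntegral_abs_mul_karamataWeight_le hα hε.le le_rfl (hmeas Pm) hK0
      (fun x hx => hK x ⟨by linarith [hx.1], by linarith [hx.2]⟩)
      (fun x hx => (hPm x (Ioc_subset_Icc_self hx)).2)
  · exact setIntegral_abs_mul_karamataWeight_le hα hε.le (sub_add_cancel b ε).ge (hmeas Pp) hK0
      (fun x hx => hK x ⟨by linarith [hx.1], by linarith [hx.2]⟩)
      (fun x hx => (hPp x (Ioc_subset_Icc_self hx)).2)
end
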